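/- For F(x,y,z) = x⁴ + y⁴ + z⁴ + a x² y² + b(x²+y²)z², the resultant with respect to x of the polynomials F(x,0,1) = x⁴ + b x² + 1 and H_F(x,0,1) equals a nonzero constant times ((b²−4)²(a² + b² − a b²))². In particular, assuming b² ≠ 4, the polynomials F(x,0,1) and H_F(x,0,1) have a common complex root if and only if a² + b² − a b² = 0. -/

import Mathlib

open Polynomial

/-- The Sylvester matrix of two polynomials `p, q` regarded as having degrees `m, n`. -/
noncomputable def sylvester (p q : ℂ[X]) (m n : ℕ) : Matrix (Fin (m + n)) (Fin (m + n)) ℂ :=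
  Matrix.of fun i j =>
    if (i : ℕ) < n then
      (if (i : ℕ) ≤ (j : ℕ) then p.coeff ((j : ℕ) - (i : ℕ)) else 0)
    else
      (if (i : ℕ) - n ≤ (j : ℕ) then q.coeff ((j : ℕ) - ((i : ℕ) - n)) else 0)

/-- The resultant, as the determinant of the Sylvester matrix. -/
noncomputable def res (p q : ℂ[X]) (m n : ℕ) : ℂ := (_root_.sylvester p q m n).det

/-- `F(x,0,1) = x⁴ + b x² + 1`. -/
noncomputable def P6 (b : ℂ) : ℂ[X] := X ^ 4 + C b * X ^ 2 + 1

/-- `H_F(x,0,1)`, the Hessian determinant of the Kuribayashi quartic at `(x,0,1)`. -/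
noncomputable def H6 (a b : ℂ) : ℂ[X] :=
  (C (2 * b) + C 12 * X ^ 2) * (C (2 * b) + C (2 * a) * X ^ 2) * (C 12 + C (2 * b) * X ^ 2) +
    C (4 * b) * X * (C (-8 * b ^ 2) * X + C (-8 * a * b) * X ^ 3)

/-! Both polynomials are even: `F(x,0,1) = f(x²)` and `H_F(x,0,1) = h(x²)` with `f` quadratic and
`h` cubic. Sorting the rows and columns of the Sylvester matrix by parity makes it block diagonal
with two copies of the Sylvester matrix of `f` and `h`, so the resultant is `Res(f, h)²`, and
`Res(f, h)` is an explicit 5 × 5 determinant.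

Since every complex number is a square, common roots of the two polynomials correspond to common
roots of `f` and `h`. Modulo `f`, `h ≡ 72 (b² - 4) (b (a - 1) y + a)`, and `f` evaluated at the
root of this linear factor is `(a² + b² - a b²) / (b (a - 1))²`. -/

theorem Nat.eq_of_add_mul_eq_add_mul {k r s i j : ℕ} (hr : r < k) (hs : s < k)
    (h : r + k * i = s + k * j) : r = s := by
  simpa [Nat.add_mul_mod_self_left, Nat.mod_eq_of_lt hr, Nat.mod_eq_of_lt hs] using
    congrArg (· % k) h

theorem ite_coeff_expand_add_mul_sub {R : Type*} [CommSemiring R] {k r s i j : ℕ} (hr : r < k)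
    (hs : s < k) (f : R[X]) :
    (if r + k * i ≤ s + k * j then (expand R k f).coeff (s + k * j - (r + k * i)) else 0) =
      if r = s then (if i ≤ j then f.coeff (j - i) else 0) else 0 := by
  have hk : 0 < k := by omega
  by_cases hrs : r = s
  · subst hrs
    by_cases hij : i ≤ j
    · obtain ⟨c, rfl⟩ := Nat.exists_eq_add_of_le hij
      rw [if_pos (by nlinarith), if_pos rfl, if_pos hij, coeff_expand hk,
        if_pos ⟨c, by rw [Nat.mul_add]; omega⟩]
      congr 1
      rw [show r + k * (i + c) - (r + k * i) = k * c by rw [mul_add]; omega,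
        Nat.mul_div_cancel_left _ hk]
      omega
    · rw [if_neg (by nlinarith), if_pos rfl, if_neg hij]
  · rw [if_neg hrs]
    split_ifs with hle
    · rw [coeff_expand hk, if_neg]
      rintro ⟨c, hc⟩
      exact hrs (Nat.eq_of_add_mul_eq_add_mul hr hs (i := i + c) (j := j) (by rw [mul_add]; omega))
    · rfl

def finProdFinMulAdd (k m n : ℕ) : Fin (m + n) × Fin k ≃ Fin (k * m + k * n) :=
  finProdFinEquiv.trans (finCongr (by ring))

theorem sylvester_expand_submatrix (p q : ℂ[X]) (k m n : ℕ) :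
    (_root_.sylvester (expand ℂ k p) (expand ℂ k q) (k * m) (k * n)).submatrix
        (finProdFinMulAdd k m n) (finProdFinMulAdd k m n) =
      Matrix.blockDiagonal fun _ => _root_.sylvester p q m n := by
  ext ⟨i, r⟩ ⟨j, s⟩
  have hr := r.isLt
  have hs := s.isLt
  simp only [Matrix.submatrix_apply, Matrix.blockDiagonal_apply', _root_.sylvester, Matrix.of_apply,
    finProdFinMulAdd, Equiv.trans_apply, finProdFinEquiv_apply_val, finCongr_apply, Fin.val_cast]
  by_cases hi : (i : ℕ) < n
  · rw [if_pos (by nlinarith), ite_coeff_expand_add_mul_sub hr hs, if_pos hi]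
    simp [Fin.ext_iff]
  · have hsub : r + k * i - k * n = r + k * (i - n) := by
      have := Nat.mul_le_mul_left k (not_lt.mp hi)
      rw [Nat.mul_sub]
      omega
    rw [if_neg (by nlinarith), hsub, ite_coeff_expand_add_mul_sub hr hs, if_neg hi]
    simp [Fin.ext_iff]

theorem res_expand (p q : ℂ[X]) (k m n : ℕ) :
    res (expand ℂ k p) (expand ℂ k q) (k * m) (k * n) = res p q m n ^ k := by
  rw [res, ← Matrix.det_submatrix_equiv_self (finProdFinMulAdd k m n),
    sylvester_expand_submatrix, Matrix.det_blockDiagonal, Finset.prod_const, Finset.card_univ,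
    Fintype.card_fin, res]

theorem exists_common_root_expand_iff {K : Type*} [Field K] [IsAlgClosed K] {k : ℕ} (hk : 0 < k)
    (p q : K[X]) :
    (∃ x, (expand K k p).eval x = 0 ∧ (expand K k q).eval x = 0) ↔
      ∃ y, p.eval y = 0 ∧ q.eval y = 0 := by
  simp only [expand_eval]
  constructor
  · rintro ⟨x, hp, hq⟩
    exact ⟨x ^ k, hp, hq⟩
  · rintro ⟨y, hp, hq⟩
    obtain ⟨x, rfl⟩ := IsAlgClosed.exists_pow_nat_eq y hk
    exact ⟨x, hp, hq⟩

noncomputable def P6half (b : ℂ) : ℂ[X] := X ^ 2 + C b * X + 1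

noncomputable def H6half (a b : ℂ) : ℂ[X] :=
  C (48 * a * b) * X ^ 3 + C (-24 * a * b ^ 2 + 48 * b ^ 2 + 288 * a) * X ^ 2 +
    C (-24 * b ^ 3 + 48 * a * b + 288 * b) * X + C (48 * b ^ 2)

theorem P6_eq_expand (b : ℂ) : P6 b = expand ℂ 2 (P6half b) := by
  simp only [P6, P6half, map_add, map_mul, map_pow, expand_C, expand_X, map_one]
  ring

theorem H6_eq_expand (a b : ℂ) : H6 a b = expand ℂ 2 (H6half a b) := by
  refine Polynomial.funext fun x => ?_
  simp only [H6, H6half, expand_eval, eval_add, eval_mul, eval_pow, eval_C, eval_X]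
  ring

theorem H6half_eq (a b : ℂ) :
    H6half a b = (C (48 * a * b) * X + C (-72 * a * b ^ 2 + 48 * b ^ 2 + 288 * a)) * P6half b +
      C (72 * (b ^ 2 - 4)) * (C (b * (a - 1)) * X + C a) := by
  refine Polynomial.funext fun x => ?_
  simp only [H6half, P6half, eval_add, eval_mul, eval_pow, eval_C, eval_X, eval_one]
  ring

theorem sylvester_P6half_H6half (a b : ℂ) :
    _root_.sylvester (P6half b) (H6half a b) 2 3 =
      !![1, b, 1, 0, 0;
         0, 1, b, 1, 0;
         0, 0, 1, b, 1;
         48 * b ^ 2, -24 * b ^ 3 + 48 * a * b + 288 * b, -24 * a * b ^ 2 + 48 * b ^ 2 + 288 * a,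
           48 * a * b, 0;
         0, 48 * b ^ 2, -24 * b ^ 3 + 48 * a * b + 288 * b,
           -24 * a * b ^ 2 + 48 * b ^ 2 + 288 * a, 48 * a * b] := by
  ext i j
  fin_cases i <;> fin_cases j <;>
    simp only [_root_.sylvester, P6half, H6half, Matrix.of_apply, coeff_add, coeff_C_mul,
      coeff_X_pow, coeff_X, coeff_C, coeff_one] <;>
    norm_num

theorem res_P6half_H6half (a b : ℂ) :
    res (P6half b) (H6half a b) 2 3 = 5184 * ((b ^ 2 - 4) ^ 2 * (a ^ 2 + b ^ 2 - a * b ^ 2)) := by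
  rw [res, sylvester_P6half_H6half]
  simp only [Nat.reduceAdd, neg_mul, Matrix.det_succ_row_zero, Nat.succ_eq_add_one, Fin.isValue,
    Matrix.of_apply, Matrix.cons_val', Matrix.cons_val_fin_one, Matrix.cons_val_zero,
    Matrix.submatrix_apply, Fin.succ_zero_eq_one, Fin.succAbove, Matrix.cons_val_one,
    Matrix.submatrix_submatrix, Function.comp_apply, Fin.succ_one_eq_two, Matrix.cons_val,
    Fin.reduceSucc, Matrix.det_unique, Fin.default_eq_zero, Fin.castSucc_zero, Fin.sum_univ_succ,
    Fin.coe_ofNat_eq_mod, Nat.zero_mod, pow_zero, one_mul, lt_self_iff_false, ↓reduceIte,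
    Fin.castSucc_one, Finset.univ_unique, Fin.val_succ, Fin.val_eq_zero, zero_add, pow_one,
    Fin.castSucc_succ, Fin.succ_pos, Finset.sum_neg_distrib, Finset.sum_singleton, not_lt_zero,
    Fin.reduceCastSucc, even_two, Even.neg_pow, one_pow, Fin.reduceLT, Fin.lt_one_iff, Fin.reduceEq,
    mul_one, zero_mul, neg_zero, add_zero, mul_zero, neg_add_rev, neg_neg, Matrix.cons_val_succ,
    Finset.sum_const_zero]
  ring

theorem res_P6_H6 (a b : ℂ) :
    res (P6 b) (H6 a b) 4 6 = 5184 ^ 2 * ((b ^ 2 - 4) ^ 2 * (a ^ 2 + b ^ 2 - a * b ^ 2)) ^ 2 := by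
  rw [P6_eq_expand, H6_eq_expand, show (4 : ℕ) = 2 * 2 from rfl, show (6 : ℕ) = 2 * 3 from rfl,
    res_expand, res_P6half_H6half]
  ring

theorem exists_root_P6half_linear_iff (a b : ℂ) :
    (∃ y, (P6half b).eval y = 0 ∧ b * (a - 1) * y + a = 0) ↔
      a ^ 2 + b ^ 2 - a * b ^ 2 = 0 := by
  simp only [P6half, eval_add, eval_mul, eval_pow, eval_C, eval_X, eval_one]
  constructor
  · rintro ⟨y, hq, hl⟩
    linear_combination (b * (a - 1)) ^ 2 * hq + (a - b * (a - 1) * y - b ^ 2 * (a - 1)) * hl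
  · intro hT
    rcases eq_or_ne b 0 with rfl | hb
    · have ha : a = 0 := by simpa using hT
      exact ⟨Complex.I, by simp [ha]⟩
    have ha : a - 1 ≠ 0 := by
      rintro ha
      obtain rfl : a = 1 := by linear_combination ha
      exact one_ne_zero (by linear_combination hT)
    refine ⟨-a / (b * (a - 1)), ?_, ?_⟩
    · field_simp
      linear_combination hT
    · field_simp
      ring

theorem exists_common_root_P6half_H6half_iff (a : ℂ) {b : ℂ} (hb : b ^ 2 ≠ 4) :
    (∃ y, (P6half b).eval y = 0 ∧ (H6half a b).eval y = 0) ↔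
      a ^ 2 + b ^ 2 - a * b ^ 2 = 0 := by
  have h72 : (72 * (b ^ 2 - 4) : ℂ) ≠ 0 := mul_ne_zero (by norm_num) (sub_ne_zero.mpr hb)
  rw [← exists_root_P6half_linear_iff]
  refine exists_congr fun y => and_congr_right fun hy => ?_
  simp [H6half_eq, hy, h72]

theorem resultant_x_axis :
    (∃ c : ℂ, c ≠ 0 ∧ ∀ a b : ℂ,
      res (P6 b) (H6 a b) 4 6 = c * ((b ^ 2 - 4) ^ 2 * (a ^ 2 + b ^ 2 - a * b ^ 2)) ^ 2) ∧
    (∀ a b : ℂ, b ≠ 0 → b ^ 2 ≠ 4 →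
      ((∃ x : ℂ, (P6 b).eval x = 0 ∧ (H6 a b).eval x = 0) ↔ a ^ 2 + b ^ 2 - a * b ^ 2 = 0)) := by
  refine ⟨⟨5184 ^ 2, by norm_num, res_P6_H6⟩, fun a b _ hb => ?_⟩
  rw [P6_eq_expand, H6_eq_expand, exists_common_root_expand_iff two_pos]
  exact exists_common_root_P6half_H6half_iff a hb
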